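/- Let H be a real inner product space, A a symmetric bilinear form, and suppose sequences uⁿ, Uⁿ in H and dissipations Dₙ ≥ 0 satisfy A(uⁿ⁺¹, 3uⁿ⁺¹−4uⁿ+uⁿ⁻¹) + 2⟨Uⁿ⁺¹, 3Uⁿ⁺¹−4Uⁿ+Uⁿ⁻¹⟩ = −2Dₙ for all n ≥ 1. Define Ēⁿ = (1/2)[E(uⁿ,Uⁿ) + E(uⁿ'*, Uⁿ'*)] where E(u,U) = (1/2)A(u,u)+‖U‖², uⁿ'* = 2uⁿ−uⁿ⁻¹, Uⁿ'* = 2Uⁿ−Uⁿ⁻¹. Then Ēⁿ⁺¹ = Ēⁿ − Dₙ − (1/4)A(uⁿ⁺¹−uⁿ'*, uⁿ⁺¹−uⁿ'*) − (1/2)‖Uⁿ⁺¹−Uⁿ'*‖². -/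

import Mathlib

/-!
The modified energy telescopes because of the BDF2 identity
`2 B(a, 3a - 4b + c) = B(a, a) + B(2a - b, 2a - b) - B(b, b) - B(2b - c, 2b - c) + B(a - 2b + c, a - 2b + c)`,
valid for every symmetric bilinear form `B`. Applying it once to `A` and once to the inner product
turns the scheme into the energy law, with `a - 2b + c = uⁿ⁺¹ - uⁿ'*` giving the numerical
dissipation terms.
-/

open scoped RealInnerProductSpace

theorem LinearMap.bdf2_identity {R M : Type*} [CommRing R] [AddCommGroup M] [Module R M]
    (B : M →ₗ[R] M →ₗ[R] R) (hB : ∀ x y, B x y = B y x) (a b c : M) :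
    2 * B a ((3 : R) • a - (4 : R) • b + c) =
      B a a + B ((2 : R) • a - b) ((2 : R) • a - b) - B b b
        - B ((2 : R) • b - c) ((2 : R) • b - c) + B (a - (2 : R) • b + c) (a - (2 : R) • b + c) := by
  simp only [map_add, map_sub, map_smul, LinearMap.add_apply, LinearMap.sub_apply,
    LinearMap.smul_apply, smul_eq_mul]
  linear_combination (-4 : R) * hB a b + hB a c

theorem stmt_13_general {H : Type*} [NormedAddCommGroup H] [InnerProductSpace ℝ H]
    (A : H →ₗ[ℝ] H →ₗ[ℝ] ℝ) (hAsym : ∀ x y, A x y = A y x)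
    (u U : ℕ → H) (D : ℕ → ℝ)
    (heq : ∀ n, 1 ≤ n →
      A (u (n + 1)) ((3 : ℝ) • u (n + 1) - (4 : ℝ) • u n + u (n - 1))
        + 2 * ⟪U (n + 1), (3 : ℝ) • U (n + 1) - (4 : ℝ) • U n + U (n - 1)⟫ = -2 * D n)
    (E : H → H → ℝ) (hE : ∀ v V, E v V = (1 / 2) * A v v + ‖V‖ ^ 2)
    (Ebar : ℕ → ℝ)
    (hEbar : ∀ n, Ebar n = (1 / 2) * (E (u n) (U n)
        + E ((2 : ℝ) • u n - u (n - 1)) ((2 : ℝ) • U n - U (n - 1)))) :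
    ∀ n, 1 ≤ n →
      Ebar (n + 1) = Ebar n - D n
        - (1 / 4) * A (u (n + 1) - ((2 : ℝ) • u n - u (n - 1)))
            (u (n + 1) - ((2 : ℝ) • u n - u (n - 1)))
        - (1 / 2) * ‖U (n + 1) - ((2 : ℝ) • U n - U (n - 1))‖ ^ 2 := by
  intro n hn
  have hA := A.bdf2_identity hAsym (u (n + 1)) (u n) (u (n - 1))
  have hU := (innerₗ H).bdf2_identity (fun x y => real_inner_comm y x) (U (n + 1)) (U n) (U (n - 1))
  simp only [innerₗ_apply_apply, real_inner_self_eq_norm_sq] at hU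
  have hu : u (n + 1) - ((2 : ℝ) • u n - u (n - 1)) = u (n + 1) - (2 : ℝ) • u n + u (n - 1) := by
    abel
  have hV : U (n + 1) - ((2 : ℝ) • U n - U (n - 1)) = U (n + 1) - (2 : ℝ) • U n + U (n - 1) := by
    abel
  simp only [hEbar, hE, Nat.add_sub_cancel, hu, hV]
  linear_combination (1 / 2) * heq n hn - (1 / 4) * hA - (1 / 2) * hU

theorem stmt_13 {H : Type*} [NormedAddCommGroup H] [InnerProductSpace ℝ H]
    (A : H →ₗ[ℝ] H →ₗ[ℝ] ℝ) (hAsym : ∀ x y, A x y = A y x)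
    (u U : ℕ → H) (D : ℕ → ℝ) (hD : ∀ n, 0 ≤ D n)
    (heq : ∀ n, 1 ≤ n →
      A (u (n + 1)) ((3 : ℝ) • u (n + 1) - (4 : ℝ) • u n + u (n - 1))
        + 2 * ⟪U (n + 1), (3 : ℝ) • U (n + 1) - (4 : ℝ) • U n + U (n - 1)⟫ = -2 * D n)
    (E : H → H → ℝ) (hE : ∀ v V, E v V = (1 / 2) * A v v + ‖V‖ ^ 2)
    (Ebar : ℕ → ℝ)
    (hEbar : ∀ n, Ebar n = (1 / 2) * (E (u n) (U n)
        + E ((2 : ℝ) • u n - u (n - 1)) ((2 : ℝ) • U n - U (n - 1)))) :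
    ∀ n, 1 ≤ n →
      Ebar (n + 1) = Ebar n - D n
        - (1 / 4) * A (u (n + 1) - ((2 : ℝ) • u n - u (n - 1)))
            (u (n + 1) - ((2 : ℝ) • u n - u (n - 1)))
        - (1 / 2) * ‖U (n + 1) - ((2 : ℝ) • U n - U (n - 1))‖ ^ 2 :=
  stmt_13_general A hAsym u U D heq E hE Ebar hEbar
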